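/- arXiv:1605.01483 — 5 statements merged into one kernel-verified Lean document; each statement's English description precedes it below -/
import Mathlib

section
/- Let H = (V,E,w) be an edge-weighted hypergraph with |V| ≥ 2 and let g ∈ ℝ^V be a nonzero vector with g ⊥_w 1 and D_w(g) = γ. Then there exists a nonzero h ∈ ℝ^V with h ⊥_w 1, D_w(h) ≤ 4γ, h_u ≥ −1/w(V) for every u ∈ V, and Σ_{u ∈ V} w_u |h_u| ≥ 1/2. (Equivalently, the measure vector φ₀ with φ₀(u) = w_u/w(V) + w_u h_u is a probability distribution on V at ℓ₁-distance at least 1/2 from the stationary distribution u ↦ w_u/w(V).) -/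
open Finset

/-- An edge-weighted hypergraph on a finite vertex set `V`: a finite set of hyperedges,
each a nonempty subset of `V`, with positive weights. -/
structure EWHypergraph (V : Type*) [Fintype V] [DecidableEq V] where
  E : Finset (Finset V)
  w : Finset V → ℝ
  edge_nonempty : ∀ e ∈ E, e.Nonempty
  w_pos : ∀ e ∈ E, 0 < w e

namespace EWHypergraph

variable {V : Type*} [Fintype V] [DecidableEq V]

/-- The weight of a vertex: total weight of hyperedges containing it. -/
noncomputable def wv (H : EWHypergraph V) (v : V) : ℝ :=
  ∑ e ∈ H.E.filter (fun e => v ∈ e), H.w e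

/-- The weight of a set of vertices. -/
noncomputable def wS (H : EWHypergraph V) (S : Finset V) : ℝ := ∑ v ∈ S, H.wv v

/-- The boundary of `S`: hyperedges meeting both `S` and its complement. -/
noncomputable def bdry (H : EWHypergraph V) (S : Finset V) : Finset (Finset V) :=
  H.E.filter (fun e => (e ∩ S).Nonempty ∧ (e \ S).Nonempty)

/-- The expansion `φ(S)` of a set of vertices. -/
noncomputable def phi (H : EWHypergraph V) (S : Finset V) : ℝ :=
  (∑ e ∈ H.bdry S, H.w e) / H.wS S

/-- `max_{u,v ∈ e} (f u - f v)^2`. -/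
noncomputable def edgeDisc (H : EWHypergraph V) (f : V → ℝ) (e : Finset V) : ℝ :=
  sSup {x : ℝ | ∃ u ∈ e, ∃ v ∈ e, (f u - f v) ^ 2 = x}

/-- The discrepancy ratio `D_w(f)`. -/
noncomputable def disc (H : EWHypergraph V) (f : V → ℝ) : ℝ :=
  (∑ e ∈ H.E, H.w e * H.edgeDisc f e) / ∑ u : V, H.wv u * f u ^ 2

/-- The weighted inner product `⟨f,g⟩_w`. -/
noncomputable def wip (H : EWHypergraph V) (f g : V → ℝ) : ℝ :=
  ∑ u : V, H.wv u * f u * g u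

/-- `γ₂`: infimum of the discrepancy ratio over nonzero `f ⊥_w 1`. -/
noncomputable def gamma2 (H : EWHypergraph V) : ℝ :=
  sInf {x : ℝ | ∃ f : V → ℝ, f ≠ 0 ∧ H.wip f (fun _ => 1) = 0 ∧ H.disc f = x}

/-- The hypergraph expansion `φ_H`. -/
noncomputable def phiH (H : EWHypergraph V) : ℝ :=
  sInf {x : ℝ | ∃ S : Finset V, S.Nonempty ∧ S ≠ univ ∧
    x = max (H.phi S) (H.phi Sᶜ)}

/-- `ζ_k`: inf over `k`-tuples of nonzero pairwise `w`-orthogonal vectors of the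
sup of the discrepancy ratio over nonzero vectors in their span. -/
noncomputable def zeta (H : EWHypergraph V) (k : ℕ) : ℝ :=
  sInf {x : ℝ | ∃ f : Fin k → V → ℝ, (∀ i, f i ≠ 0) ∧
    (∀ i j, i ≠ j → H.wip (f i) (f j) = 0) ∧
    x = sSup {y : ℝ | ∃ h : V → ℝ, h ≠ 0 ∧
      h ∈ Submodule.span ℝ (Set.range f) ∧ H.disc h = y}}

/-- `ξ_k`: inf over `k`-tuples of nonzero pairwise `w`-orthogonal vectors of the
maximum discrepancy ratio among them. -/
noncomputable def xi (H : EWHypergraph V) (k : ℕ) : ℝ :=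
  sInf {x : ℝ | ∃ f : Fin k → V → ℝ, (∀ i, f i ≠ 0) ∧
    (∀ i j, i ≠ j → H.wip (f i) (f j) = 0) ∧
    x = sSup {y : ℝ | ∃ i, H.disc (f i) = y}}

/-- A sequence of procedural minimizers: `f 0` is a nonzero constant vector, each `f i`
is nonzero and `w`-orthogonal to the previous ones, and attains the infimum of the
discrepancy ratio over nonzero vectors `w`-orthogonal to the previous ones. -/
def IsProcMin (H : EWHypergraph V) {k : ℕ} (f : Fin k → V → ℝ) : Prop :=
  (∀ i, f i ≠ 0) ∧
  (∀ i : Fin k, (i : ℕ) = 0 → ∃ c : ℝ, f i = fun _ => c) ∧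
  (∀ i j : Fin k, (j : ℕ) < (i : ℕ) → H.wip (f i) (f j) = 0) ∧
  (∀ i : Fin k, 0 < (i : ℕ) → H.disc (f i) =
    sInf {x : ℝ | ∃ g : V → ℝ, g ≠ 0 ∧
      (∀ j : Fin k, (j : ℕ) < (i : ℕ) → H.wip g (f j) = 0) ∧ H.disc g = x})

end EWHypergraph

/-!
Take a weighted median `c` of `g` and split `g - c` into its positive and negative parts.
Truncation does not increase the numerator of the discrepancy ratio, and since `g ⊥_w 1` the two
parts together carry at least `Σ_u w_u g_u²`, so one of them, `f ≥ 0`, keeps half of it while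
vanishing on a set of weight at least `w(V)/2`. By Cauchy–Schwarz on the support of `f`, centring
`f` at its `w`-mean loses at most another half of the denominator, which gives the factor `4`.
The vector `h = f / ⟨f,1⟩_w - 1 / w(V)` is this centred vector rescaled; it is at least `-1/w(V)`
because `f ≥ 0`, and equals `-1/w(V)` on the zero set of `f`, which has weight at least `w(V)/2`.
-/

theorem Finset.exists_weighted_median {α : Type*} (s : Finset α) {w : α → ℝ}
    (hw : ∀ a ∈ s, 0 ≤ w a) (g : α → ℝ) :
    ∃ c, ∑ a ∈ s, w a ≤ 2 * ∑ a ∈ s with g a ≤ c, w a ∧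
      ∑ a ∈ s, w a ≤ 2 * ∑ a ∈ s with c ≤ g a, w a := by
  rcases s.eq_empty_or_nonempty with rfl | hs
  · exact ⟨0, by simp⟩
  set F : ℝ → ℝ := fun t => ∑ a ∈ s with g a ≤ t, w a
  obtain ⟨m, hm, hmax⟩ := s.exists_max_image g hs
  have hFm : F (g m) = ∑ a ∈ s, w a := by simp only [F, filter_true_of_mem hmax]
  obtain ⟨u, hu, hmin⟩ := (s.filter fun a => ∑ a ∈ s, w a ≤ 2 * F (g a)).exists_min_image g
    ⟨m, mem_filter.2 ⟨hm, by linarith [sum_nonneg hw]⟩⟩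
  rw [mem_filter] at hu
  refine ⟨g u, hu.2, ?_⟩
  have hsplit := sum_filter_add_sum_filter_not s (fun a => g a < g u) w
  simp only [not_lt] at hsplit
  suffices 2 * ∑ a ∈ s with g a < g u, w a ≤ ∑ a ∈ s, w a by linarith
  rcases (s.filter fun a => g a < g u).eq_empty_or_nonempty with hempty | hne
  · rw [hempty, sum_empty]; linarith [sum_nonneg hw]
  obtain ⟨v, hv, hvmax⟩ := (s.filter fun a => g a < g u).exists_max_image g hne
  rw [mem_filter] at hv
  have hFv : 2 * F (g v) < ∑ a ∈ s, w a := by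
    by_contra! h
    exact (hmin v (mem_filter.2 ⟨hv.1, h⟩)).not_gt hv.2
  have hle : ∑ a ∈ s with g a < g u, w a ≤ F (g v) :=
    sum_le_sum_of_subset_of_nonneg (fun a ha => mem_filter.2 ⟨(mem_filter.1 ha).1, hvmax a ha⟩)
      fun a ha _ => hw a (mem_filter.1 ha).1
  linarith

namespace EWHypergraph

variable {V : Type*} [Fintype V] [DecidableEq V] (H : EWHypergraph V)

noncomputable def energy (f : V → ℝ) : ℝ := ∑ e ∈ H.E, H.w e * H.edgeDisc f e

noncomputable def normSq (f : V → ℝ) : ℝ := ∑ u, H.wv u * f u ^ 2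

noncomputable def mean (f : V → ℝ) : ℝ := H.wip f (fun _ => 1) / H.wS univ

/-- With `φ₀ = w f / ⟨f,1⟩_w`, the distribution proportional to `w f`, this is the `w`-density
of `φ₀ - w / w(V)`. -/
noncomputable def densityDeviation (f : V → ℝ) : V → ℝ :=
  fun u => f u / H.wip f (fun _ => 1) - 1 / H.wS univ

lemma disc_eq_energy_div_normSq (f : V → ℝ) : H.disc f = H.energy f / H.normSq f := rfl

lemma wv_nonneg (v : V) : 0 ≤ H.wv v :=
  sum_nonneg fun e he => (H.w_pos e (mem_filter.1 he).1).le

lemma wS_nonneg (s : Finset V) : 0 ≤ H.wS s :=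
  sum_nonneg fun v _ => H.wv_nonneg v

lemma wS_mono {s t : Finset V} (hst : s ⊆ t) : H.wS s ≤ H.wS t :=
  sum_le_sum_of_subset_of_nonneg hst fun v _ _ => H.wv_nonneg v

lemma wS_univ_pos [Nonempty V] (hw : ∀ v, 0 < H.wv v) : 0 < H.wS univ :=
  sum_pos (fun v _ => hw v) univ_nonempty

lemma wip_const_one (f : V → ℝ) : H.wip f (fun _ => 1) = ∑ u, H.wv u * f u := by
  simp [wip]

lemma wip_const_one_pos (hw : ∀ v, 0 < H.wv v) {f : V → ℝ} (hf0 : ∀ u, 0 ≤ f u) (hf : f ≠ 0) :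
    0 < H.wip f (fun _ => 1) := by
  obtain ⟨u, hu⟩ := Function.ne_iff.1 hf
  rw [wip_const_one]
  exact sum_pos' (fun v _ => mul_nonneg (hw v).le (hf0 v))
    ⟨u, mem_univ u, mul_pos (hw u) ((hf0 u).lt_of_ne' hu)⟩

lemma edgeDisc_eq_sup' (f : V → ℝ) {e : Finset V} (he : e.Nonempty) :
    H.edgeDisc f e = (e ×ˢ e).sup' (he.product he) fun p => (f p.1 - f p.2) ^ 2 := by
  rw [sup'_eq_csSup_image, edgeDisc]
  congr 1
  ext x
  simp [and_assoc]

lemma edgeDisc_nonneg (f : V → ℝ) (e : Finset V) : 0 ≤ H.edgeDisc f e :=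
  Real.sSup_nonneg <| by
    rintro _ ⟨u, -, v, -, rfl⟩
    exact sq_nonneg _

lemma edgeDisc_mono {f g : V → ℝ} {e : Finset V} (he : e.Nonempty)
    (hfg : ∀ u ∈ e, ∀ v ∈ e, |f u - f v| ≤ |g u - g v|) :
    H.edgeDisc f e ≤ H.edgeDisc g e := by
  rw [H.edgeDisc_eq_sup' f he, H.edgeDisc_eq_sup' g he]
  refine sup'_le _ _ fun p hp => ?_
  refine le_trans ?_ (le_sup' (fun p : V × V => (g p.1 - g p.2) ^ 2) hp)
  rw [mem_product] at hp
  exact sq_le_sq.2 (hfg _ hp.1 _ hp.2)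

lemma edgeDisc_const_mul_sub (f : V → ℝ) (t c : ℝ) (e : Finset V) :
    H.edgeDisc (fun u => t * (f u - c)) e = t ^ 2 * H.edgeDisc f e := by
  rw [edgeDisc, edgeDisc, ← smul_eq_mul, ← Real.sSup_smul_of_nonneg (sq_nonneg t)]
  congr 1
  ext x
  simp only [Set.mem_smul_set, smul_eq_mul]
  constructor
  · rintro ⟨u, hu, v, hv, rfl⟩
    exact ⟨_, ⟨u, hu, v, hv, rfl⟩, by ring⟩
  · rintro ⟨_, ⟨u, hu, v, hv, rfl⟩, rfl⟩
    exact ⟨u, hu, v, hv, by ring⟩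

lemma energy_nonneg (f : V → ℝ) : 0 ≤ H.energy f :=
  sum_nonneg fun e he => mul_nonneg (H.w_pos e he).le (H.edgeDisc_nonneg f e)

lemma energy_mono {f g : V → ℝ} (hfg : ∀ u v, |f u - f v| ≤ |g u - g v|) :
    H.energy f ≤ H.energy g :=
  sum_le_sum fun e he => mul_le_mul_of_nonneg_left
    (H.edgeDisc_mono (H.edge_nonempty e he) fun u _ v _ => hfg u v) (H.w_pos e he).le

lemma energy_const_mul_sub (f : V → ℝ) (t c : ℝ) :
    H.energy (fun u => t * (f u - c)) = t ^ 2 * H.energy f := by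
  simp only [energy, edgeDisc_const_mul_sub, mul_sum]
  exact sum_congr rfl fun e _ => by ring

lemma normSq_pos (hw : ∀ v, 0 < H.wv v) {f : V → ℝ} (hf : f ≠ 0) : 0 < H.normSq f := by
  obtain ⟨u, hu⟩ := Function.ne_iff.1 hf
  exact sum_pos' (fun v _ => mul_nonneg (hw v).le (sq_nonneg _))
    ⟨u, mem_univ u, mul_pos (hw u) (sq_pos_iff.2 hu)⟩

lemma normSq_const_mul (f : V → ℝ) (t : ℝ) :
    H.normSq (fun u => t * f u) = t ^ 2 * H.normSq f := by
  simp only [normSq, mul_sum]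
  exact sum_congr rfl fun u _ => by ring

lemma normSq_sub_const (f : V → ℝ) (c : ℝ) :
    H.normSq (fun u => f u - c) =
      H.normSq f - 2 * c * H.wip f (fun _ => 1) + c ^ 2 * H.wS univ := by
  simp only [normSq, wip_const_one, wS, mul_sum, ← sum_sub_distrib, ← sum_add_distrib]
  exact sum_congr rfl fun u _ => by ring

lemma sq_wip_const_one_le (f : V → ℝ) :
    H.wip f (fun _ => 1) ^ 2 ≤ H.wS (univ.filter fun u => f u ≠ 0) * H.normSq f := by
  rw [wip_const_one, ← sum_filter_of_ne fun u _ (h : H.wv u * f u ≠ 0) => right_ne_zero_of_mul h]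
  calc (∑ u with f u ≠ 0, H.wv u * f u) ^ 2
      ≤ (∑ u with f u ≠ 0, H.wv u) * ∑ u with f u ≠ 0, H.wv u * f u ^ 2 :=
        sum_sq_le_sum_mul_sum_of_sq_le_mul _ (fun u _ => H.wv_nonneg u)
          (fun u _ => mul_nonneg (H.wv_nonneg u) (sq_nonneg _)) fun u _ => le_of_eq (by ring)
    _ ≤ H.wS (univ.filter fun u => f u ≠ 0) * H.normSq f :=
        mul_le_mul_of_nonneg_left
          (sum_le_sum_of_subset_of_nonneg (filter_subset _ _)
            fun u _ _ => mul_nonneg (H.wv_nonneg u) (sq_nonneg _))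
          (H.wS_nonneg _)

lemma normSq_le_two_mul_normSq_sub_mean (hW : 0 < H.wS univ) {f : V → ℝ}
    (hzero : H.wS univ ≤ 2 * H.wS (univ.filter fun u => f u = 0)) :
    H.normSq f ≤ 2 * H.normSq (fun u => f u - H.mean f) := by
  set m := H.wip f (fun _ => 1)
  have hsplit : H.wS (univ.filter fun u => f u = 0) + H.wS (univ.filter fun u => f u ≠ 0) =
      H.wS univ :=
    sum_filter_add_sum_filter_not univ (fun u => f u = 0) H.wv
  have hN : 0 ≤ H.normSq f := sum_nonneg fun u _ => mul_nonneg (H.wv_nonneg u) (sq_nonneg _)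
  have hCS : 2 * m ^ 2 ≤ H.wS univ * H.normSq f := by nlinarith [H.sq_wip_const_one_le f]
  have hloss : 2 * (m / H.wS univ) * m - (m / H.wS univ) ^ 2 * H.wS univ = m ^ 2 / H.wS univ := by
    field_simp; ring
  have hkey : m ^ 2 / H.wS univ ≤ H.normSq f / 2 := by
    rw [div_le_iff₀ hW]; linarith
  rw [normSq_sub_const, mean]
  linarith

lemma exists_nonneg_truncation {g : V → ℝ} (hg : H.wip g (fun _ => 1) = 0) :
    ∃ f : V → ℝ, (∀ u, 0 ≤ f u) ∧ H.energy f ≤ H.energy g ∧ H.normSq g ≤ 2 * H.normSq f ∧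
      H.wS univ ≤ 2 * H.wS (univ.filter fun u => f u = 0) := by
  obtain ⟨c, hbelow, habove⟩ : ∃ c, H.wS univ ≤ 2 * H.wS (univ.filter fun u => g u ≤ c) ∧
      H.wS univ ≤ 2 * H.wS (univ.filter fun u => c ≤ g u) :=
    univ.exists_weighted_median (fun u _ => H.wv_nonneg u) g
  set p : V → ℝ := fun u => max (g u - c) 0
  set q : V → ℝ := fun u => max (c - g u) 0
  have hshift : H.normSq (fun u => g u - c) = H.normSq g + c ^ 2 * H.wS univ := by
    rw [normSq_sub_const, hg]; ring
  have hpq : H.normSq p + H.normSq q = H.normSq (fun u => g u - c) := by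
    rw [normSq, normSq, normSq, ← sum_add_distrib]
    refine sum_congr rfl fun u _ => ?_
    simp only [p, q]
    rcases le_total (g u) c with h | h
    · rw [max_eq_right (by linarith), max_eq_left (by linarith)]; ring
    · rw [max_eq_left (by linarith), max_eq_right (by linarith)]; ring
  have hc : 0 ≤ c ^ 2 * H.wS univ := mul_nonneg (sq_nonneg c) (H.wS_nonneg univ)
  have hp : H.energy p ≤ H.energy g := H.energy_mono fun u v => by
    simpa using abs_max_sub_max_le_abs (g u - c) (g v - c) 0
  have hq : H.energy q ≤ H.energy g := H.energy_mono fun u v => by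
    simpa [abs_sub_comm] using abs_max_sub_max_le_abs (c - g u) (c - g v) 0
  have hpz : H.wS (univ.filter fun u => g u ≤ c) ≤ H.wS (univ.filter fun u => p u = 0) :=
    H.wS_mono fun u hu => by simp_all [p]
  have hqz : H.wS (univ.filter fun u => c ≤ g u) ≤ H.wS (univ.filter fun u => q u = 0) :=
    H.wS_mono fun u hu => by simp_all [q]
  rcases le_total (H.normSq q) (H.normSq p) with h | h
  · exact ⟨p, fun u => le_max_right _ _, hp, by linarith, by linarith⟩
  · exact ⟨q, fun u => le_max_right _ _, hq, by linarith, by linarith⟩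

lemma densityDeviation_eq {f : V → ℝ} (hm : H.wip f (fun _ => 1) ≠ 0) :
    H.densityDeviation f = fun u => (H.wip f fun _ => 1)⁻¹ * (f u - H.mean f) := by
  ext u
  simp only [densityDeviation, mean]
  field_simp

lemma wip_densityDeviation_const_one {f : V → ℝ} (hm : H.wip f (fun _ => 1) ≠ 0)
    (hW : H.wS univ ≠ 0) : H.wip (H.densityDeviation f) (fun _ => 1) = 0 := by
  rw [wip_const_one]
  simp only [densityDeviation, mul_sub, sum_sub_distrib, mul_div, mul_one, ← sum_div]
  rw [← wip_const_one, div_self hm, show ∑ u, H.wv u = H.wS univ from rfl, div_self hW, sub_self]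

lemma disc_densityDeviation {f : V → ℝ} (hm : H.wip f (fun _ => 1) ≠ 0) :
    H.disc (H.densityDeviation f) = H.energy f / H.normSq (fun u => f u - H.mean f) := by
  rw [H.densityDeviation_eq hm, disc_eq_energy_div_normSq, energy_const_mul_sub,
    normSq_const_mul (f := fun u => f u - H.mean f), mul_div_mul_left _ _ (by positivity)]

lemma neg_inv_wS_univ_le_densityDeviation {f : V → ℝ} (hf0 : ∀ u, 0 ≤ f u)
    (hm : 0 ≤ H.wip f (fun _ => 1)) (u : V) : -(1 / H.wS univ) ≤ H.densityDeviation f u := by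
  have : 0 ≤ f u / H.wip f (fun _ => 1) := div_nonneg (hf0 u) hm
  simp only [densityDeviation]
  linarith

lemma half_le_sum_abs_densityDeviation {f : V → ℝ} (hW : 0 < H.wS univ)
    (hzero : H.wS univ ≤ 2 * H.wS (univ.filter fun u => f u = 0)) :
    1 / 2 ≤ ∑ u, H.wv u * |H.densityDeviation f u| :=
  calc 1 / 2 ≤ H.wS (univ.filter fun u => f u = 0) / H.wS univ := by
        rw [le_div_iff₀ hW]; linarith
    _ = ∑ u with f u = 0, H.wv u * |H.densityDeviation f u| := by
        rw [wS, sum_div]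
        refine sum_congr rfl fun u hu => ?_
        rw [densityDeviation, (mem_filter.1 hu).2, zero_div, zero_sub, abs_neg,
          abs_of_pos (by positivity)]
        ring
    _ ≤ ∑ u, H.wv u * |H.densityDeviation f u| :=
        sum_le_sum_of_subset_of_nonneg (filter_subset _ _)
          fun u _ _ => mul_nonneg (H.wv_nonneg u) (abs_nonneg _)

end EWHypergraph

theorem initial_distribution_construction_general {V : Type*} [Fintype V] [DecidableEq V]
    (H : EWHypergraph V) (hw : ∀ v : V, 0 < H.wv v)
    (g : V → ℝ) (hg : g ≠ 0) (horth : H.wip g (fun _ => 1) = 0)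
    (γ : ℝ) (hγ : H.disc g = γ) :
    ∃ h : V → ℝ, h ≠ 0 ∧ H.wip h (fun _ => 1) = 0 ∧ H.disc h ≤ 4 * γ ∧
      (∀ u : V, -(1 / H.wS Finset.univ) ≤ h u) ∧
      1 / 2 ≤ ∑ u : V, H.wv u * |h u| := by
  have : Nonempty V := (Function.ne_iff.1 hg).nonempty
  have hW := H.wS_univ_pos hw
  have hg2 := H.normSq_pos hw hg
  obtain ⟨f, hf0, henergy, hnorm, hzero⟩ := H.exists_nonneg_truncation horth
  have hf : f ≠ 0 := by
    rintro rfl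
    have : H.normSq 0 = 0 := by simp [EWHypergraph.normSq]
    linarith
  have hm := H.wip_const_one_pos hw hf0 hf
  have hcentred := H.normSq_le_two_mul_normSq_sub_mean hW hzero
  have hL1 := H.half_le_sum_abs_densityDeviation hW hzero
  refine ⟨H.densityDeviation f, fun h0 => ?_, H.wip_densityDeviation_const_one hm.ne' hW.ne', ?_,
    H.neg_inv_wS_univ_le_densityDeviation hf0 hm.le, hL1⟩
  · norm_num [h0] at hL1
  rw [H.disc_densityDeviation hm.ne', ← hγ, EWHypergraph.disc_eq_energy_div_normSq]
  calc H.energy f / H.normSq (fun u => f u - H.mean f)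
      ≤ H.energy g / (H.normSq g / 4) :=
        div_le_div₀ (H.energy_nonneg g) henergy (by positivity) (by linarith)
    _ = 4 * (H.energy g / H.normSq g) := by field_simp

/-- Construction of a far-from-stationary probability distribution: from a nonzero
`g ⊥_w 1` with `D_w(g) = γ`, one obtains a nonzero `h ⊥_w 1` with `D_w(h) ≤ 4γ`,
`h_u ≥ −1/w(V)` for all `u`, and `Σ_u w_u |h_u| ≥ 1/2`. -/
theorem initial_distribution_construction {V : Type*} [Fintype V] [DecidableEq V]
    (H : EWHypergraph V) (hV : 2 ≤ Fintype.card V) (hw : ∀ v : V, 0 < H.wv v)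
    (g : V → ℝ) (hg : g ≠ 0) (horth : H.wip g (fun _ => 1) = 0)
    (γ : ℝ) (hγ : H.disc g = γ) :
    ∃ h : V → ℝ, h ≠ 0 ∧ H.wip h (fun _ => 1) = 0 ∧ H.disc h ≤ 4 * γ ∧
      (∀ u : V, -(1 / H.wS Finset.univ) ≤ h u) ∧
      1 / 2 ≤ ∑ u : V, H.wv u * |h u| :=
  initial_distribution_construction_general H hw g hg horth γ hγ
end

section
/- In a densest-subset instance, if P₁ and P₂ are both densest subsets, then P₁ ∪ P₂ is a densest subset, and if moreover P₁ ∩ P₂ ≠ ∅, then P₁ ∩ P₂ is also a densest subset. Consequently, there is a unique maximal densest subset, and it contains every densest subset. -/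
open Finset

/-- A densest-subset instance: a finite set `U` with positive vertex weights, two finite
indexed families `Ie` and `Se` of nonempty subsets of `U` (repetitions allowed), and a
positive value for each member. -/
structure DSInstance (U : Type*) [Fintype U] [DecidableEq U] where
  w : U → ℝ
  w_pos : ∀ v : U, 0 < w v
  nI : ℕ
  nS : ℕ
  Ie : Fin nI → Finset U
  Se : Fin nS → Finset U
  Ic : Fin nI → ℝ
  Sc : Fin nS → ℝ
  Ie_nonempty : ∀ i, (Ie i).Nonempty
  Se_nonempty : ∀ i, (Se i).Nonempty
  Ic_pos : ∀ i, 0 < Ic i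
  Sc_pos : ∀ i, 0 < Sc i

namespace DSInstance

variable {U : Type*} [Fintype U] [DecidableEq U]

/-- `c(I_X)`: the total value of members of `I` contained in `X`. -/
noncomputable def cI (D : DSInstance U) (X : Finset U) : ℝ :=
  ∑ i ∈ Finset.univ.filter (fun i => D.Ie i ⊆ X), D.Ic i

/-- `c(S_X)`: the total value of members of `S` intersecting `X`. -/
noncomputable def cS (D : DSInstance U) (X : Finset U) : ℝ :=
  ∑ i ∈ Finset.univ.filter (fun i => (D.Se i ∩ X).Nonempty), D.Sc i

/-- `w(X)`: the total weight of the vertices in `X`. -/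
noncomputable def wX (D : DSInstance U) (X : Finset U) : ℝ := ∑ v ∈ X, D.w v

/-- The density `δ(X) = (c(I_X) − c(S_X))/w(X)`. -/
noncomputable def delta (D : DSInstance U) (X : Finset U) : ℝ :=
  (D.cI X - D.cS X) / D.wX X

/-- A densest subset: a nonempty `P` maximizing `δ` among nonempty subsets. -/
def IsDensest (D : DSInstance U) (P : Finset U) : Prop :=
  P.Nonempty ∧ ∀ X : Finset U, X.Nonempty → D.delta X ≤ D.delta P

end DSInstance

/-! The map `X ↦ c(I_X) − c(S_X)` is supermodular and `w` is modular, so for `r` the maximal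
density the surplus `c(I_X) − c(S_X) − r·w(X)` is a supermodular function that is `≤ 0`
everywhere and vanishes exactly on the densest subsets (and on `∅`). If it vanishes at `P₁`
and `P₂`, supermodularity forces it to vanish at `P₁ ∪ P₂` and `P₁ ∩ P₂`. The maximal densest
subset is then the union of all densest subsets. -/

lemma ite_add_ite_le_ite_add_ite {p q r s : Prop} [Decidable p] [Decidable q] [Decidable r]
    [Decidable s] {c : ℝ} (hc : 0 ≤ c) (hor : p ∨ q → r ∨ s) (hand : p ∧ q → r ∧ s) :
    (if p then c else 0) + (if q then c else 0) ≤ (if r then c else 0) + (if s then c else 0) := by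
  split_ifs <;> simp_all

namespace DSInstance

variable {U : Type*} [Fintype U] [DecidableEq U] (D : DSInstance U)

lemma cI_add_cI_le (X Y : Finset U) : D.cI X + D.cI Y ≤ D.cI (X ∪ Y) + D.cI (X ∩ Y) := by
  simp only [cI, sum_filter, ← sum_add_distrib]
  refine sum_le_sum fun i _ => ite_add_ite_le_ite_add_ite (D.Ic_pos i).le ?_ ?_
  · rintro (h | h)
    exacts [.inl (h.trans subset_union_left), .inl (h.trans subset_union_right)]
  · exact fun h => ⟨h.1.trans subset_union_left, subset_inter h.1 h.2⟩

lemma cS_union_add_cS_inter_le (X Y : Finset U) :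
    D.cS (X ∪ Y) + D.cS (X ∩ Y) ≤ D.cS X + D.cS Y := by
  simp only [cS, sum_filter, ← sum_add_distrib]
  refine sum_le_sum fun i _ => ite_add_ite_le_ite_add_ite (D.Sc_pos i).le ?_ ?_
  · rintro (h | h)
    · rwa [inter_union_distrib_left, union_nonempty] at h
    · exact .inl (h.mono (inter_subset_inter_left inter_subset_left))
  · exact fun h => ⟨h.2.mono (inter_subset_inter_left inter_subset_left),
      h.2.mono (inter_subset_inter_left inter_subset_right)⟩

lemma wX_union_add_wX_inter (X Y : Finset U) :
    D.wX (X ∪ Y) + D.wX (X ∩ Y) = D.wX X + D.wX Y :=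
  sum_union_inter (s₁ := X) (s₂ := Y) (f := D.w)

lemma wX_pos {X : Finset U} (hX : X.Nonempty) : 0 < D.wX X :=
  sum_pos (fun v _ => D.w_pos v) hX

lemma cI_empty : D.cI ∅ = 0 :=
  sum_eq_zero fun i hi => absurd (subset_empty.1 (mem_filter.1 hi).2) (D.Ie_nonempty i).ne_empty

lemma cS_empty : D.cS ∅ = 0 := by
  simp [cS]

noncomputable def surplus (r : ℝ) (X : Finset U) : ℝ :=
  D.cI X - D.cS X - r * D.wX X

lemma surplus_empty (r : ℝ) : D.surplus r ∅ = 0 := by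
  simp [surplus, cI_empty, cS_empty, wX]

lemma surplus_add_surplus_le (r : ℝ) (X Y : Finset U) :
    D.surplus r X + D.surplus r Y ≤ D.surplus r (X ∪ Y) + D.surplus r (X ∩ Y) := by
  simp only [surplus]
  linear_combination D.cI_add_cI_le X Y + D.cS_union_add_cS_inter_le X Y +
    r * D.wX_union_add_wX_inter X Y

lemma surplus_eq_zero_iff {X : Finset U} (hX : X.Nonempty) (r : ℝ) :
    D.surplus r X = 0 ↔ D.delta X = r := by
  rw [surplus, delta, div_eq_iff (D.wX_pos hX).ne', sub_eq_zero]

lemma surplus_nonpos_iff {X : Finset U} (hX : X.Nonempty) (r : ℝ) :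
    D.surplus r X ≤ 0 ↔ D.delta X ≤ r := by
  rw [surplus, delta, div_le_iff₀ (D.wX_pos hX), sub_nonpos]

namespace IsDensest

variable {D} {P P₁ P₂ : Finset U}

lemma surplus_self (hP : D.IsDensest P) : D.surplus (D.delta P) P = 0 :=
  (D.surplus_eq_zero_iff hP.1 _).2 rfl

lemma surplus_nonpos (hP : D.IsDensest P) (X : Finset U) : D.surplus (D.delta P) X ≤ 0 := by
  rcases X.eq_empty_or_nonempty with rfl | hX
  · exact (D.surplus_empty _).le
  · exact (D.surplus_nonpos_iff hX _).2 (hP.2 X hX)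

lemma delta_eq (h1 : D.IsDensest P₁) (h2 : D.IsDensest P₂) : D.delta P₁ = D.delta P₂ :=
  le_antisymm (h2.2 P₁ h1.1) (h1.2 P₂ h2.1)

lemma of_surplus_eq_zero (hP : D.IsDensest P) {X : Finset U} (hX : X.Nonempty)
    (h : D.surplus (D.delta P) X = 0) : D.IsDensest X := by
  rw [D.surplus_eq_zero_iff hX] at h
  exact ⟨hX, h ▸ hP.2⟩

lemma surplus_union_eq_zero_and_surplus_inter_eq_zero (h1 : D.IsDensest P₁)
    (h2 : D.IsDensest P₂) :
    D.surplus (D.delta P₁) (P₁ ∪ P₂) = 0 ∧ D.surplus (D.delta P₁) (P₁ ∩ P₂) = 0 := by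
  have h2_self : D.surplus (D.delta P₁) P₂ = 0 := h1.delta_eq h2 ▸ h2.surplus_self
  have := D.surplus_add_surplus_le (D.delta P₁) P₁ P₂
  have := h1.surplus_nonpos (P₁ ∪ P₂)
  have := h1.surplus_nonpos (P₁ ∩ P₂)
  constructor <;> linarith [h1.surplus_self]

lemma union (h1 : D.IsDensest P₁) (h2 : D.IsDensest P₂) : D.IsDensest (P₁ ∪ P₂) :=
  h1.of_surplus_eq_zero (h1.1.mono subset_union_left)
    (h1.surplus_union_eq_zero_and_surplus_inter_eq_zero h2).1

lemma inter (h1 : D.IsDensest P₁) (h2 : D.IsDensest P₂) (hne : (P₁ ∩ P₂).Nonempty) :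
    D.IsDensest (P₁ ∩ P₂) :=
  h1.of_surplus_eq_zero hne (h1.surplus_union_eq_zero_and_surplus_inter_eq_zero h2).2

lemma existsUnique_maximal (hP : D.IsDensest P) :
    ∃! M : Finset U, D.IsDensest M ∧ ∀ Q : Finset U, D.IsDensest Q → Q ⊆ M := by
  classical
  set densest := univ.filter D.IsDensest
  have hmem : ∀ Q, Q ∈ densest ↔ D.IsDensest Q := by simp [densest]
  have hne : densest.Nonempty := ⟨P, (hmem P).2 hP⟩
  have hsup : D.IsDensest (densest.sup' hne id) :=
    sup'_induction hne id (fun _ hQ _ hR => hQ.union hR) fun Q hQ => (hmem Q).1 hQ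
  refine ⟨densest.sup' hne id, ⟨hsup, fun Q hQ => le_sup' id ((hmem Q).2 hQ)⟩, ?_⟩
  rintro M ⟨hM, hM_max⟩
  exact (le_sup' id ((hmem M).2 hM)).antisymm (hM_max _ hsup)

end IsDensest

end DSInstance

/-- Properties of densest subsets: the union of two densest subsets is densest, a nonempty
intersection of two densest subsets is densest, and there is a unique maximal densest
subset containing every densest subset. -/
theorem densest_subsets_lattice {U : Type*} [Fintype U] [DecidableEq U]
    (D : DSInstance U) (P₁ P₂ : Finset U)
    (h1 : D.IsDensest P₁) (h2 : D.IsDensest P₂) :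
    D.IsDensest (P₁ ∪ P₂) ∧
    ((P₁ ∩ P₂).Nonempty → D.IsDensest (P₁ ∩ P₂)) ∧
    ∃! M : Finset U, D.IsDensest M ∧ ∀ P : Finset U, D.IsDensest P → P ⊆ M :=
  ⟨h1.union h2, h1.inter h2, h1.existsUnique_maximal⟩
end

section
/- In a densest-subset instance on U, let X be a densest subset with U' := U ∖ X nonempty. Define the remaining instance on U' with families I' := { e ∩ U' : e ∈ I ∖ I_X } and S' := { e ∩ U' : e ∈ S ∖ S_X } (each member keeping its value c_e; every member of I' and S' is a nonempty subset of U'), and let δ' be its density function. Then for every nonempty Y ⊆ U', δ'(Y) ≤ δ(X), and δ'(Y) = δ(X) if and only if δ(X ∪ Y) = δ(X). -/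
open Finset

/-- Remaining instance after removing a densest subset `X`: for every nonempty `Y ⊆ U∖X`,
the density `δ'(Y)` of `Y` in the remaining instance (whose families are
`{e ∩ (U∖X) : e ∈ I∖I_X}` and `{e ∩ (U∖X) : e ∈ S∖S_X}`, keeping values) satisfies
`δ'(Y) ≤ δ(X)`, with equality iff `δ(X ∪ Y) = δ(X)`. -/
theorem densest_remaining_instance {U : Type*} [Fintype U] [DecidableEq U]
    (D : DSInstance U) (X : Finset U) (hX : D.IsDensest X) (hU' : (Xᶜ : Finset U).Nonempty) :
    ∀ Y : Finset U, Y ⊆ Xᶜ → Y.Nonempty →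
      ((∑ i ∈ Finset.univ.filter (fun i => ¬ D.Ie i ⊆ X ∧ D.Ie i \ X ⊆ Y), D.Ic i) -
          ∑ i ∈ Finset.univ.filter
            (fun i => D.Se i ∩ X = ∅ ∧ (D.Se i ∩ Y).Nonempty), D.Sc i) / D.wX Y ≤
        D.delta X ∧
      (((∑ i ∈ Finset.univ.filter (fun i => ¬ D.Ie i ⊆ X ∧ D.Ie i \ X ⊆ Y), D.Ic i) -
          ∑ i ∈ Finset.univ.filter
            (fun i => D.Se i ∩ X = ∅ ∧ (D.Se i ∩ Y).Nonempty), D.Sc i) / D.wX Y =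
          D.delta X ↔
        D.delta (X ∪ Y) = D.delta X) := by
  intro Y hYX hY
  classical
  obtain ⟨hXne, hmax⟩ := hX
  -- disjointness
  have hdisj : Disjoint X Y := by
    refine Finset.disjoint_left.mpr fun a ha hay => ?_
    have := hYX hay
    simp [Finset.mem_compl] at this
    exact this ha
  -- positivity of weights
  have hwX : 0 < D.wX X := Finset.sum_pos (fun v _ => D.w_pos v) hXne
  have hwY : 0 < D.wX Y := Finset.sum_pos (fun v _ => D.w_pos v) hY
  have hwXY : D.wX (X ∪ Y) = D.wX X + D.wX Y := by
    simpa [DSInstance.wX] using Finset.sum_union hdisj (f := D.w)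
  -- split cI
  have hIsplit : D.cI (X ∪ Y) = D.cI X +
      ∑ i ∈ Finset.univ.filter (fun i => ¬ D.Ie i ⊆ X ∧ D.Ie i \ X ⊆ Y), D.Ic i := by
    have hset : Finset.univ.filter (fun i => D.Ie i ⊆ X ∪ Y) =
        Finset.univ.filter (fun i => D.Ie i ⊆ X) ∪
        Finset.univ.filter (fun i => ¬ D.Ie i ⊆ X ∧ D.Ie i \ X ⊆ Y) := by
      ext i
      simp only [Finset.mem_filter, Finset.mem_union, Finset.mem_univ, true_and]
      constructor
      · intro h
        by_cases hx : D.Ie i ⊆ X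
        · exact Or.inl hx
        · refine Or.inr ⟨hx, fun a ha => ?_⟩
          have hm := Finset.mem_sdiff.mp ha
          rcases Finset.mem_union.mp (h hm.1) with h1 | h1
          · exact absurd h1 hm.2
          · exact h1
      · rintro (h | ⟨-, h⟩)
        · exact h.trans Finset.subset_union_left
        · intro a ha
          by_cases hax : a ∈ X
          · exact Finset.mem_union.mpr (Or.inl hax)
          · exact Finset.mem_union.mpr (Or.inr (h (Finset.mem_sdiff.mpr ⟨ha, hax⟩)))
    have hd : Disjoint (Finset.univ.filter (fun i => D.Ie i ⊆ X))
        (Finset.univ.filter (fun i => ¬ D.Ie i ⊆ X ∧ D.Ie i \ X ⊆ Y)) := by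
      refine Finset.disjoint_left.mpr fun i hi hi' => ?_
      simp only [Finset.mem_filter] at hi hi'
      exact hi'.2.1 hi.2
    rw [DSInstance.cI, hset, Finset.sum_union hd]; rfl
  -- split cS
  have hSsplit : D.cS (X ∪ Y) = D.cS X +
      ∑ i ∈ Finset.univ.filter (fun i => D.Se i ∩ X = ∅ ∧ (D.Se i ∩ Y).Nonempty), D.Sc i := by
    have hset : Finset.univ.filter (fun i => (D.Se i ∩ (X ∪ Y)).Nonempty) =
        Finset.univ.filter (fun i => (D.Se i ∩ X).Nonempty) ∪
        Finset.univ.filter (fun i => D.Se i ∩ X = ∅ ∧ (D.Se i ∩ Y).Nonempty) := by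
      ext i
      simp only [Finset.mem_filter, Finset.mem_union, Finset.mem_univ, true_and]
      by_cases hx : (D.Se i ∩ X).Nonempty
      · have h1 : (D.Se i ∩ X ∪ D.Se i ∩ Y).Nonempty := hx.inl
        simp [Finset.inter_union_distrib_left, h1, hx, hx.ne_empty]
      · have he := Finset.not_nonempty_iff_eq_empty.mp hx
        simp [Finset.inter_union_distrib_left, he]
    have hd : Disjoint (Finset.univ.filter (fun i => (D.Se i ∩ X).Nonempty))
        (Finset.univ.filter (fun i => D.Se i ∩ X = ∅ ∧ (D.Se i ∩ Y).Nonempty)) := by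
      refine Finset.disjoint_left.mpr fun i hi hi' => ?_
      simp only [Finset.mem_filter] at hi hi'
      exact hi.2.ne_empty hi'.2.1
    rw [DSInstance.cS, hset, Finset.sum_union hd]; rfl
  set A := D.cI X - D.cS X with hA
  set B := (∑ i ∈ Finset.univ.filter (fun i => ¬ D.Ie i ⊆ X ∧ D.Ie i \ X ⊆ Y), D.Ic i) -
      ∑ i ∈ Finset.univ.filter (fun i => D.Se i ∩ X = ∅ ∧ (D.Se i ∩ Y).Nonempty), D.Sc i with hB
  have hdeltaXY : D.delta (X ∪ Y) = (A + B) / (D.wX X + D.wX Y) := by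
    rw [DSInstance.delta, hIsplit, hSsplit, hwXY, hA, hB]; ring_nf
  have hdeltaX : D.delta X = A / D.wX X := rfl
  have hab : 0 < D.wX X + D.wX Y := by linarith
  -- key transfer: (A+B)/(a+b) ≤ A/a ↔ B/b ≤ A/a, same for equality
  have key_le : (A + B) / (D.wX X + D.wX Y) ≤ A / D.wX X ↔ B / D.wX Y ≤ A / D.wX X := by
    rw [div_le_div_iff₀ hab hwX, div_le_div_iff₀ hwY hwX]
    constructor <;> intro h <;> nlinarith
  have key_eq : (A + B) / (D.wX X + D.wX Y) = A / D.wX X ↔ B / D.wX Y = A / D.wX X := by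
    rw [div_eq_div_iff hab.ne' hwX.ne', div_eq_div_iff hwY.ne' hwX.ne']
    constructor <;> intro h <;> nlinarith
  have hle : D.delta (X ∪ Y) ≤ D.delta X :=
    hmax (X ∪ Y) (hXne.mono Finset.subset_union_left)
  rw [hdeltaXY, hdeltaX] at hle
  constructor
  · exact (key_le.mp hle)
  · rw [hdeltaXY, hdeltaX]
    exact key_eq.symm
end

section
/- Let Y_1, …, Y_m be real random variables on a common probability space, not necessarily independent, such that each Y_i is centered Gaussian, and suppose E[ Σ_{i ∈ [m]} Y_i² ] = 1. Then P[ Σ_{i ∈ [m]} Y_i² ≥ 1/2 ] ≥ 1/12. -/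
/-!
Write `S = ∑ i, Y i ^ 2`. The moment generating function `exp (v t² / 2)` of a centered Gaussian
of variance `v` gives `E[Y⁴] = 3 E[Y²]²`, so by Cauchy–Schwarz `E[Y_i² Y_j²] ≤ 3 E[Y_i²] E[Y_j²]`
for every pair, whatever the dependence between them; summing over pairs, `E[S²] ≤ 3 (E S)² = 3`.
The Paley–Zygmund inequality at `θ = 1/2` then gives `P[S ≥ 1/2] ≥ (1/2)² (E S)² / E[S²] ≥ 1/12`.
-/

open MeasureTheory ProbabilityTheory

lemma hasDerivAt_mul_exp_mul_sq_div_two {p : ℝ → ℝ} {p' v t : ℝ} (hp : HasDerivAt p p' t) :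
    HasDerivAt (fun t ↦ p t * Real.exp (v * t ^ 2 / 2))
      ((p' + p t * (v * t)) * Real.exp (v * t ^ 2 / 2)) t := by
  have h : HasDerivAt (fun t ↦ v * t ^ 2 / 2) (v * t) t :=
    (((hasDerivAt_pow 2 t).const_mul v).div_const 2).congr_deriv (by ring)
  exact (hp.fun_mul h.exp).congr_deriv (by ring)

lemma iteratedDeriv_exp_mul_sq_div_two_zero (v : ℝ) :
    iteratedDeriv 2 (fun t ↦ Real.exp (v * t ^ 2 / 2)) 0 = v ∧
      iteratedDeriv 4 (fun t ↦ Real.exp (v * t ^ 2 / 2)) 0 = 3 * v ^ 2 := by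
  have d1 : deriv (fun t ↦ Real.exp (v * t ^ 2 / 2)) =
      fun t ↦ v * t * Real.exp (v * t ^ 2 / 2) := by
    funext t
    simpa using (hasDerivAt_mul_exp_mul_sq_div_two (v := v) (hasDerivAt_const t (1 : ℝ))).deriv
  have d2 : deriv (fun t ↦ v * t * Real.exp (v * t ^ 2 / 2)) =
      fun t ↦ (v + v ^ 2 * t ^ 2) * Real.exp (v * t ^ 2 / 2) := by
    funext t
    exact ((hasDerivAt_mul_exp_mul_sq_div_two ((hasDerivAt_id' t).const_mul v)).congr_deriv
      (by ring)).deriv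
  have d3 : deriv (fun t ↦ (v + v ^ 2 * t ^ 2) * Real.exp (v * t ^ 2 / 2)) =
      fun t ↦ (3 * v ^ 2 * t + v ^ 3 * t ^ 3) * Real.exp (v * t ^ 2 / 2) := by
    funext t
    exact ((hasDerivAt_mul_exp_mul_sq_div_two
      (((hasDerivAt_pow 2 t).const_mul (v ^ 2)).const_add v)).congr_deriv (by ring)).deriv
  have d4 : deriv (fun t ↦ (3 * v ^ 2 * t + v ^ 3 * t ^ 3) * Real.exp (v * t ^ 2 / 2)) =
      fun t ↦ (3 * v ^ 2 + 6 * v ^ 3 * t ^ 2 + v ^ 4 * t ^ 4) * Real.exp (v * t ^ 2 / 2) := by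
    funext t
    exact ((hasDerivAt_mul_exp_mul_sq_div_two (((hasDerivAt_id' t).const_mul (3 * v ^ 2)).fun_add
      ((hasDerivAt_pow 3 t).const_mul (v ^ 3)))).congr_deriv (by ring)).deriv
  simp only [iteratedDeriv_succ', iteratedDeriv_zero, d1, d2, d3, d4]
  norm_num

namespace ProbabilityTheory

lemma integral_pow_gaussianReal_eq_iteratedDeriv (v : NNReal) (n : ℕ) :
    ∫ x, x ^ n ∂gaussianReal 0 v = iteratedDeriv n (fun t ↦ Real.exp (v * t ^ 2 / 2)) 0 := by
  have h := iteratedDeriv_mgf_zero (X := id) (μ := gaussianReal 0 v) (by simp) n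
  simpa [mgf_id_gaussianReal] using h.symm

lemma integral_sq_gaussianReal (v : NNReal) : ∫ x, x ^ 2 ∂gaussianReal 0 v = v := by
  rw [integral_pow_gaussianReal_eq_iteratedDeriv, (iteratedDeriv_exp_mul_sq_div_two_zero v).1]

lemma integral_pow_four_gaussianReal (v : NNReal) :
    ∫ x, x ^ 4 ∂gaussianReal 0 v = 3 * v ^ 2 := by
  rw [integral_pow_gaussianReal_eq_iteratedDeriv, (iteratedDeriv_exp_mul_sq_div_two_zero v).2]

variable {Ω : Type*} [MeasurableSpace Ω] {μ : Measure Ω}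

lemma HasLaw.integral_pow_four_eq_three_mul_sq {Y : Ω → ℝ} {v : NNReal}
    (hY : HasLaw Y (gaussianReal 0 v) μ) :
    ∫ ω, Y ω ^ 4 ∂μ = 3 * (∫ ω, Y ω ^ 2 ∂μ) ^ 2 := by
  rw [← Function.comp_def (fun x : ℝ ↦ x ^ 4), ← Function.comp_def (fun x : ℝ ↦ x ^ 2),
    hY.integral_comp (by fun_prop), hY.integral_comp (by fun_prop),
    integral_pow_four_gaussianReal, integral_sq_gaussianReal]

lemma HasLaw.memLp_sq_of_gaussianReal {Y : Ω → ℝ} {v : NNReal}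
    (hY : HasLaw Y (gaussianReal 0 v) μ) : MemLp (fun ω ↦ Y ω ^ 2) 2 μ := by
  have h4 : Integrable (fun x : ℝ ↦ x ^ 4) (gaussianReal 0 v) :=
    integrable_pow_of_mem_interior_integrableExpSet (X := id) (by simp) 4
  rw [← hY.map_eq, integrable_map_measure (by fun_prop) hY.aemeasurable] at h4
  rw [memLp_two_iff_integrable_sq (hY.aemeasurable.pow_const 2).aestronglyMeasurable]
  simpa only [Function.comp_def, ← pow_mul] using h4

lemma integral_mul_le_sqrt_integral_sq_mul_sqrt {f g : Ω → ℝ} (hf0 : 0 ≤ f) (hg0 : 0 ≤ g)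
    (hf : MemLp f 2 μ) (hg : MemLp g 2 μ) :
    ∫ ω, f ω * g ω ∂μ ≤ √(∫ ω, f ω ^ 2 ∂μ) * √(∫ ω, g ω ^ 2 ∂μ) := by
  have h := integral_mul_le_Lp_mul_Lq_of_nonneg Real.HolderConjugate.two_two
    (.of_forall hf0) (.of_forall hg0) (by simpa using hf) (by simpa using hg)
  simpa only [Real.rpow_two, ← Real.sqrt_eq_rpow] using h

lemma integral_sq_sum_le_mul_sq_integral_sum [IsFiniteMeasure μ] {ι : Type*} (s : Finset ι)
    {X : ι → Ω → ℝ} {K : ℝ} (hK : 0 ≤ K) (hX0 : ∀ i, 0 ≤ X i) (hX : ∀ i, MemLp (X i) 2 μ)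
    (hXK : ∀ i, ∫ ω, X i ω ^ 2 ∂μ ≤ K * (∫ ω, X i ω ∂μ) ^ 2) :
    ∫ ω, (∑ i ∈ s, X i ω) ^ 2 ∂μ ≤ K * (∫ ω, ∑ i ∈ s, X i ω ∂μ) ^ 2 := by
  set a := fun i ↦ ∫ ω, X i ω ∂μ
  have ha : ∀ i, 0 ≤ a i := fun i ↦ integral_nonneg (hX0 i)
  have hpair : ∀ i j, ∫ ω, X i ω * X j ω ∂μ ≤ K * a i * a j := fun i j ↦
    calc ∫ ω, X i ω * X j ω ∂μ
        ≤ √(∫ ω, X i ω ^ 2 ∂μ) * √(∫ ω, X j ω ^ 2 ∂μ) :=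
          integral_mul_le_sqrt_integral_sq_mul_sqrt (hX0 i) (hX0 j) (hX i) (hX j)
      _ ≤ √(K * a i ^ 2) * √(K * a j ^ 2) := by gcongr <;> exact hXK _
      _ = K * a i * a j := by
          rw [Real.sqrt_mul hK, Real.sqrt_mul hK, Real.sqrt_sq (ha i), Real.sqrt_sq (ha j),
            mul_mul_mul_comm, Real.mul_self_sqrt hK, mul_assoc]
  have hint : ∀ i j, Integrable (fun ω ↦ X i ω * X j ω) μ :=
    fun i j ↦ (hX i).integrable_mul (hX j)
  calc ∫ ω, (∑ i ∈ s, X i ω) ^ 2 ∂μ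
      = ∑ i ∈ s, ∑ j ∈ s, ∫ ω, X i ω * X j ω ∂μ := by
        simp_rw [sq, Finset.sum_mul_sum]
        rw [integral_finsetSum _ fun i _ ↦ integrable_finsetSum _ fun j _ ↦ hint i j]
        exact Finset.sum_congr rfl fun i _ ↦ integral_finsetSum _ fun j _ ↦ hint i j
    _ ≤ ∑ i ∈ s, ∑ j ∈ s, K * a i * a j := by gcongr with i _ j _; exact hpair i j
    _ = K * (∫ ω, ∑ i ∈ s, X i ω ∂μ) ^ 2 := by
        rw [integral_finsetSum _ fun i _ ↦ (hX i).integrable one_le_two, sq, Finset.sum_mul_sum,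
          Finset.mul_sum]
        simp_rw [Finset.mul_sum, mul_assoc]
        rfl

theorem paley_zygmund [IsProbabilityMeasure μ] {Z : Ω → ℝ} (hZm : Measurable Z) (hZ0 : 0 ≤ Z)
    (hZ : MemLp Z 2 μ) {θ : ℝ} (hθ₀ : 0 ≤ θ) (hθ₁ : θ ≤ 1) :
    (1 - θ) ^ 2 * (∫ ω, Z ω ∂μ) ^ 2 ≤ μ.real {ω | θ * ∫ ω', Z ω' ∂μ ≤ Z ω} * ∫ ω, Z ω ^ 2 ∂μ := by
  set E := ∫ ω, Z ω ∂μ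
  set A := {ω | θ * E ≤ Z ω}
  have hA : MeasurableSet A := measurableSet_le measurable_const hZm
  have hE : 0 ≤ E := integral_nonneg hZ0
  have hZA : ∀ ω, Z ω ≤ θ * E + A.indicator Z ω := by
    intro ω
    by_cases hω : ω ∈ A
    · simpa [hω] using mul_nonneg hθ₀ hE
    · simpa [hω] using (not_le.mp hω).le
  have hZint : Integrable Z μ := hZ.integrable one_le_two
  have hmean : (1 - θ) * E ≤ ∫ ω, A.indicator Z ω ∂μ := by
    have h := integral_mono hZint ((integrable_const _).fun_add (hZint.indicator hA)) hZA
    rw [integral_add (integrable_const _) (hZint.indicator hA), integral_const] at h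
    simp only [probReal_univ, one_smul] at h
    linarith
  have hCS : ∫ ω, A.indicator Z ω ∂μ ≤ √(∫ ω, Z ω ^ 2 ∂μ) * √(μ.real A) := by
    have h1A : 0 ≤ A.indicator (1 : Ω → ℝ) := Set.indicator_nonneg fun _ _ ↦ zero_le_one
    have h := integral_mul_le_sqrt_integral_sq_mul_sqrt hZ0 h1A hZ ((memLp_const 1).indicator hA)
    have h1 : ∀ ω, Z ω * A.indicator 1 ω = A.indicator Z ω := fun ω ↦ by
      by_cases hω : ω ∈ A <;> simp [hω]
    have h2 : ∀ ω, A.indicator (1 : Ω → ℝ) ω ^ 2 = A.indicator 1 ω := fun ω ↦ by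
      by_cases hω : ω ∈ A <;> simp [hω]
    simpa only [h1, h2, integral_indicator_one hA] using h
  calc (1 - θ) ^ 2 * E ^ 2 = ((1 - θ) * E) ^ 2 := by ring
    _ ≤ (√(∫ ω, Z ω ^ 2 ∂μ) * √(μ.real A)) ^ 2 :=
        pow_le_pow_left₀ (mul_nonneg (sub_nonneg.2 hθ₁) hE) (hmean.trans hCS) 2
    _ = μ.real A * ∫ ω, Z ω ^ 2 ∂μ := by
        rw [mul_pow, Real.sq_sqrt (integral_nonneg fun ω ↦ sq_nonneg (Z ω)),
          Real.sq_sqrt measureReal_nonneg, mul_comm]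

end ProbabilityTheory

/-- For (not necessarily independent) centered Gaussian random variables `Y_1, …, Y_m`
with `E[Σ_i Y_i²] = 1`, we have `P[Σ_i Y_i² ≥ 1/2] ≥ 1/12`. -/
theorem gaussian_sum_squares_anticoncentration {Ω : Type*} [MeasurableSpace Ω]
    (μ : Measure Ω) [IsProbabilityMeasure μ]
    (m : ℕ) (Y : Fin m → Ω → ℝ)
    (hmeas : ∀ i, Measurable (Y i))
    (hlaw : ∀ i, ∃ v : NNReal, μ.map (Y i) = gaussianReal 0 v)
    (hE : (∫ ω, (∑ i : Fin m, Y i ω ^ 2) ∂μ) = 1) :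
    (1 / 12 : ENNReal) ≤ μ {ω | 1 / 2 ≤ ∑ i : Fin m, Y i ω ^ 2} := by
  choose v hv using hlaw
  have hY i : HasLaw (Y i) (gaussianReal 0 (v i)) μ := ⟨(hmeas i).aemeasurable, hv i⟩
  have hL2 i : MemLp (fun ω ↦ Y i ω ^ 2) 2 μ := (hY i).memLp_sq_of_gaussianReal
  have hS2 : ∫ ω, (∑ i, Y i ω ^ 2) ^ 2 ∂μ ≤ 3 := by
    have h := integral_sq_sum_le_mul_sq_integral_sum Finset.univ (X := fun i ω ↦ Y i ω ^ 2)
      zero_le_three (fun i ω ↦ sq_nonneg (Y i ω)) hL2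
      fun i ↦ by simpa only [← pow_mul] using (hY i).integral_pow_four_eq_three_mul_sq.le
    simpa [hE] using h
  have hPZ := paley_zygmund (Finset.measurable_sum _ fun i _ ↦ (hmeas i).pow_const 2)
    (fun ω ↦ Finset.sum_nonneg fun i _ ↦ sq_nonneg (Y i ω))
    (memLp_finsetSum Finset.univ fun i _ ↦ hL2 i) one_half_pos.le one_half_lt_one.le
  rw [hE, mul_one] at hPZ
  have hP : (1 / 12 : ℝ) ≤ μ.real {ω | 1 / 2 ≤ ∑ i, Y i ω ^ 2} := by
    nlinarith [measureReal_nonneg (μ := μ) (s := {ω | 1 / 2 ≤ ∑ i, Y i ω ^ 2})]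
  calc (1 / 12 : ENNReal) = ENNReal.ofReal (1 / 12) := by simp
    _ ≤ _ := ENNReal.ofReal_le_of_le_toReal hP
end

section
/- Let u and v be nonzero vectors in a real inner product space. Then ‖ u/‖u‖ − v/‖v‖ ‖ ≤ 2 · ‖u − v‖ / √(‖u‖² + ‖v‖²). -/
/-! For unit vectors `x, y` and reals `a, b` one has the identity
`‖a • x - b • y‖² = a b ‖x - y‖² + (a - b)²`. Applied to `u = ‖u‖ • û`, `v = ‖v‖ • v̂` and combined
with `‖û - v̂‖ ≤ 2`, it gives the Dunkl–Williams inequality `‖û - v̂‖ (‖u‖ + ‖v‖) ≤ 2 ‖u - v‖`, and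
`√(‖u‖² + ‖v‖²) ≤ ‖u‖ + ‖v‖` finishes the proof. -/

section

variable {F : Type*} [NormedAddCommGroup F] [InnerProductSpace ℝ F]

theorem norm_smul_sub_smul_sq_of_norm_eq_one {x y : F} (hx : ‖x‖ = 1) (hy : ‖y‖ = 1)
    (a b : ℝ) : ‖a • x - b • y‖ ^ 2 = a * b * ‖x - y‖ ^ 2 + (a - b) ^ 2 := by
  rw [norm_sub_sq_real, norm_sub_sq_real, norm_smul, norm_smul, real_inner_smul_left,
    real_inner_smul_right, hx, hy, Real.norm_eq_abs, Real.norm_eq_abs, mul_pow, mul_pow, sq_abs,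
    sq_abs]
  ring

theorem norm_inv_norm_smul_sub_mul_le {u v : F} (hu : u ≠ 0) (hv : v ≠ 0) :
    ‖‖u‖⁻¹ • u - ‖v‖⁻¹ • v‖ * (‖u‖ + ‖v‖) ≤ 2 * ‖u - v‖ := by
  set x := ‖u‖⁻¹ • u
  set y := ‖v‖⁻¹ • v
  have hx : ‖x‖ = 1 := norm_smul_inv_norm hu
  have hy : ‖y‖ = 1 := norm_smul_inv_norm hv
  have hxy : ‖x - y‖ ≤ 2 := by linarith [norm_sub_le x y]
  have hsplit : ‖u - v‖ ^ 2 = ‖u‖ * ‖v‖ * ‖x - y‖ ^ 2 + (‖u‖ - ‖v‖) ^ 2 := by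
    conv_lhs => rw [← smul_inv_smul₀ (norm_ne_zero_iff.mpr hu) u,
      ← smul_inv_smul₀ (norm_ne_zero_iff.mpr hv) v]
    exact norm_smul_sub_smul_sq_of_norm_eq_one hx hy _ _
  have hxy_sq : ‖x - y‖ ^ 2 ≤ 2 ^ 2 := pow_le_pow_left₀ (norm_nonneg _) hxy 2
  -- `(a + b)² = 4ab + (a - b)²`, so this is `4 * hsplit` weakened by `hxy_sq`
  have hsq : (‖x - y‖ * (‖u‖ + ‖v‖)) ^ 2 ≤ (2 * ‖u - v‖) ^ 2 := by
    nlinarith [mul_le_mul_of_nonneg_right hxy_sq (sq_nonneg (‖u‖ - ‖v‖))]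
  exact le_of_sq_le_sq hsq (by positivity)

end

/-- For nonzero vectors `u, v` in a real inner product space,
`‖u/‖u‖ − v/‖v‖‖ ≤ 2‖u − v‖/√(‖u‖² + ‖v‖²)`. -/
theorem normalized_vectors_dist_bound {F : Type*} [NormedAddCommGroup F]
    [InnerProductSpace ℝ F] (u v : F) (hu : u ≠ 0) (hv : v ≠ 0) :
    ‖‖u‖⁻¹ • u - ‖v‖⁻¹ • v‖ ≤ 2 * ‖u - v‖ / Real.sqrt (‖u‖ ^ 2 + ‖v‖ ^ 2) := by
  have hpos : 0 < Real.sqrt (‖u‖ ^ 2 + ‖v‖ ^ 2) := by positivity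
  have hsqrt : Real.sqrt (‖u‖ ^ 2 + ‖v‖ ^ 2) ≤ ‖u‖ + ‖v‖ :=
    (Real.sqrt_le_left (by positivity)).mpr (by nlinarith [norm_nonneg u, norm_nonneg v])
  rw [le_div_iff₀ hpos]
  calc ‖‖u‖⁻¹ • u - ‖v‖⁻¹ • v‖ * Real.sqrt (‖u‖ ^ 2 + ‖v‖ ^ 2)
      ≤ ‖‖u‖⁻¹ • u - ‖v‖⁻¹ • v‖ * (‖u‖ + ‖v‖) := by gcongr
    _ ≤ 2 * ‖u - v‖ := norm_inv_norm_smul_sub_mul_le hu hv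
end
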